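/- Consider the online pricing model with η-pessimistic buyers, where the seller runs the two-phase pricing algorithm with parameter λ ∈ (0,1]. Let rev(p, Q) = p·Pr_{j~P}[θ_j ≥ p and j ∈ Q], let p*(Q) maximize rev(p, Q) over p, and let i_Q ∈ Q be such that θ_{i_Q} = p*(Q). For t > t_λ, let j_t = min{j ∈ S_t}, and let B_t be the event that (1) i_Q ∈ S_t and (2) rev(p*(Q), Q) − rev(θ_{j_t}, Q) ≤ 4·ρ_{t−1} (where by convention ρ_{t_λ} = 1). Let C_t = ∩_{s = t_λ+1}^{t} B_s. Then Pr(C_t^c) ≤ 1/T for every t > t_λ. -/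

import Mathlib

open MeasureTheory ProbabilityTheory Finset
open scoped ENNReal Classical

/-- The online pricing model with `d` buyer types and `T` rounds (rounds are indexed
`1, …, T`).  Types arrive i.i.d. from the distribution `q` on `Fin d`; type `i` has
ex-ante value `θ i` and ex-post value distribution `D i` supported on `[0,1]` with
mean `θ i`.  The ex-post values are pre-generated: the buyer of round `s`, if of type
`i` and purchasing, reports the review `vdraw s i`.  The seller posts the price
`price t` on round `t`, the buyer of round `t` uses the threshold `tau t` and buys
iff `price t ≤ tau t` (field `buy`, constrained by `BuyerRule` below). -/
structure PricingModel (Ω : Type) [MeasurableSpace Ω] where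
  d : ℕ
  T : ℕ
  hd : 1 ≤ d
  hT : 1 ≤ T
  η : ℝ
  hη : η ∈ Set.Ioo (0:ℝ) 1
  lam : ℝ
  hlam : lam ∈ Set.Ioc (0:ℝ) 1
  q : Fin d → ℝ
  hq_nonneg : ∀ i, 0 ≤ q i
  hq_sum : ∑ i, q i = 1
  θ : Fin d → ℝ
  hθ_mem : ∀ i, θ i ∈ Set.Icc (0:ℝ) 1
  hθ_mono : Monotone θ
  Pr : Measure Ω
  hPr : IsProbabilityMeasure Pr
  D : Fin d → Measure ℝ
  hD_prob : ∀ i, IsProbabilityMeasure (D i)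
  hD_supp : ∀ i, (D i) (Set.Icc (0:ℝ) 1) = 1
  hD_mean : ∀ i, (∫ x, x ∂(D i)) = θ i
  itype : ℕ → Ω → Fin d
  vdraw : ℕ → Fin d → Ω → ℝ
  h_itype_meas : ∀ s, Measurable (itype s)
  h_vdraw_meas : ∀ s i, Measurable (vdraw s i)
  h_itype_law : ∀ s i, Pr {ω | itype s ω = i} = ENNReal.ofReal (q i)
  h_vdraw_law : ∀ s i, Measure.map (vdraw s i) Pr = D i
  h_indep : iIndepFun
      (fun s ω => (itype s ω, fun i => vdraw s i ω)) Pr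
  h_indep_within : ∀ s, IndepFun (itype s) (fun ω i => vdraw s i ω) Pr
  price : ℕ → Ω → ℝ
  tau : ℕ → Ω → ℝ
  buy : ℕ → Ω → Bool
  pstar : ℝ
  hpstar_mem : pstar ∈ Set.Icc (0:ℝ) 1
  hpstar_opt : ∀ p ∈ Set.Icc (0:ℝ) 1,
      p * (∑ i, if p ≤ θ i then q i else 0) ≤ pstar * (∑ i, if pstar ≤ θ i then q i else 0)

namespace PricingModel

variable {Ω : Type} [MeasurableSpace Ω] (M : PricingModel Ω)

/-- The review left on round `s` (relevant only if a purchase occurred). -/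
noncomputable def review (s : ℕ) (ω : Ω) : ℝ := M.vdraw s (M.itype s ω) ω

/-- Rounds before round `t` on which a buyer of type `i` purchased (and hence reviewed). -/
noncomputable def Phi (i : Fin M.d) (t : ℕ) (ω : Ω) : Finset ℕ :=
  (Finset.Ico 1 t).filter (fun s => M.buy s ω = true ∧ M.itype s ω = i)

/-- Number of reviews by buyers of type `i` before round `t`. -/
noncomputable def nPhi (i : Fin M.d) (t : ℕ) (ω : Ω) : ℕ := (M.Phi i t ω).card

/-- Sum of the reviews left by buyers of type `i` before round `t`. -/
noncomputable def phiSum (i : Fin M.d) (t : ℕ) (ω : Ω) : ℝ :=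
  ∑ s ∈ M.Phi i t ω, M.review s ω

/-- The lower confidence bound `LB_t` available to the round-`t` buyer. -/
noncomputable def LBt (t : ℕ) (ω : Ω) : ℝ :=
  if M.nPhi (M.itype t ω) t ω = 0 then 0
  else max 0 (M.phiSum (M.itype t ω) t ω / (M.nPhi (M.itype t ω) t ω)
      - Real.sqrt (Real.log ((t : ℝ) / M.η) / (2 * (M.nPhi (M.itype t ω) t ω))))

/-- The seller's lower confidence bound `LB_{i,t}` on the value of type `i` at round `t`. -/
noncomputable def LBi (i : Fin M.d) (t : ℕ) (ω : Ω) : ℝ :=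
  if M.nPhi i t ω = 0 then 0
  else max 0 (M.phiSum i t ω / (M.nPhi i t ω)
      - Real.sqrt (Real.log ((M.T : ℝ) / M.η) / (2 * (M.nPhi i t ω))))

/-- Length of Phase 1: `t_λ = 32 ln(d T²)/λ + 1` (rounded). -/
noncomputable def tlam : ℕ := ⌈32 * Real.log ((M.d : ℝ) * (M.T : ℝ) ^ 2) / M.lam⌉₊ + 1

/-- Empirical frequency of type `i` during Phase 1. -/
noncomputable def qbar (i : Fin M.d) (ω : Ω) : ℝ :=
  (((Finset.Icc 1 M.tlam).filter (fun s => M.itype s ω = i)).card : ℝ) / M.tlam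

/-- The set `Q` of types appearing on at least a `(3λ/4)`-fraction of Phase-1 rounds. -/
noncomputable def Qset (ω : Ω) : Finset (Fin M.d) :=
  Finset.univ.filter (fun i => 3 * M.lam / 4 ≤ M.qbar i ω)

/-- The confidence radius `ρ_t = sqrt(ln(d T²)/(2(t − t_λ)))`. -/
noncomputable def rho (t : ℕ) : ℝ :=
  Real.sqrt (Real.log ((M.d : ℝ) * (M.T : ℝ) ^ 2) / (2 * ((t : ℝ) - (M.tlam : ℝ))))

/-- `ρ` with the convention `ρ_{t_λ} = 1`. -/
noncomputable def rho' (t : ℕ) : ℝ := if t = M.tlam then 1 else M.rho t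

/-- The revenue estimate `μ̄_{i,t}`. -/
noncomputable def mubar (i : Fin M.d) (t : ℕ) (ω : Ω) : ℝ :=
  (∑ s ∈ Finset.Icc (M.tlam + 1) t,
      if M.buy s ω = true ∧ M.θ i ≤ M.θ (M.itype s ω) ∧ M.itype s ω ∈ M.Qset ω
      then M.θ i else 0) / ((t : ℝ) - (M.tlam : ℝ))

/-- Upper confidence bound `μ̂_{i,t}`. -/
noncomputable def muhat (i : Fin M.d) (t : ℕ) (ω : Ω) : ℝ := M.mubar i t ω + M.rho t

/-- Lower confidence bound `μ̌_{i,t}`. -/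
noncomputable def mucheck (i : Fin M.d) (t : ℕ) (ω : Ω) : ℝ := M.mubar i t ω - M.rho t

/-- `rev(p, Q) = p ⋅ Pr_{j∼P}[θ_j ≥ p and j ∈ Q]` (for the realized random set `Q`). -/
noncomputable def revQ (p : ℝ) (ω : Ω) : ℝ :=
  p * ∑ j, if p ≤ M.θ j ∧ j ∈ M.Qset ω then M.q j else 0

/-- The seller's realized revenue over the `T` rounds. -/
noncomputable def revenue (ω : Ω) : ℝ :=
  ∑ t ∈ Finset.Icc 1 M.T, M.price t ω * (if M.buy t ω then 1 else 0)

/-- Expected regret: `T⋅p*⋅Pr[θ_i ≥ p*] − E[Σ_t p_t b_t]`. -/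
noncomputable def regret : ℝ :=
  (M.T : ℝ) * (M.pstar * ∑ i, if M.pstar ≤ M.θ i then M.q i else 0)
    - ∫ ω, M.revenue ω ∂M.Pr

/-- The smallest appearance probability of any type. -/
noncomputable def qmin : ℝ := ⨅ i, M.q i

/-- σ-algebra of the history before round `t` (all types and potential reviews of
rounds `< t`). -/
noncomputable def histMS (t : ℕ) : MeasurableSpace Ω :=
  MeasurableSpace.comap
    (fun ω => fun s : Fin t => (M.itype (s : ℕ) ω, fun i => M.vdraw (s : ℕ) i ω))
    inferInstance

/-- Buyers purchase iff the price is at most their threshold. -/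
def BuyerRule : Prop := ∀ t ω, (M.buy t ω = true ↔ M.price t ω ≤ M.tau t ω)

/-- η-pessimism: the buyer's threshold is at least the lower confidence bound `LB_t`. -/
def Pessimistic : Prop := ∀ t ω, 1 ≤ t → t ≤ M.T → M.LBt t ω ≤ M.tau t ω

/-- The buyer's threshold is a function of the history (in particular of the past
reviews) and of the buyer's own type. -/
def TauAdapted : Prop :=
  ∀ t, Measurable[M.histMS t ⊔ MeasurableSpace.comap (M.itype t) inferInstance] (M.tau t)

/-- The seller's price is a measurable function of the observable history. -/
def PriceAdapted : Prop := ∀ t, Measurable[M.histMS t] (M.price t)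

end PricingModel

/-- A run of the two-phase pricing algorithm: Phase 1 (rounds `1,…,t_λ`) gives the item
for free; `S` is the successively refined active set of Phase 2, initialized at `Q`,
during which the price is `min_{i ∈ S_t} min(θ_i, LB_{i,t})` and types whose revenue
upper confidence bound falls below the best lower confidence bound are eliminated. -/
structure Algorithm {Ω : Type} [MeasurableSpace Ω] (M : PricingModel Ω) where
  S : ℕ → Ω → Finset (Fin M.d)
  h_phase1_price : ∀ t ω, t ≤ M.tlam → M.price t ω = 0
  h_phase1_buy : ∀ t ω, 1 ≤ t → t ≤ M.tlam → M.buy t ω = true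
  h_S_init : ∀ ω, S (M.tlam + 1) ω = M.Qset ω
  h_price2 : ∀ t ω, M.tlam < t →
      M.price t ω =
        if h : (S t ω).Nonempty then (S t ω).inf' h (fun i => min (M.θ i) (M.LBi i t ω))
        else 0
  h_S_step : ∀ t ω, M.tlam < t →
      S (t + 1) ω = (S t ω).filter
        (fun i => ∃ j ∈ S t ω, j ≤ i ∧ ∀ k ∈ S t ω, M.mucheck k t ω ≤ M.muhat j t ω)

/-!
Let `j*` be the smallest revenue-maximizing type of `Q`. For a type `k` and a Phase-2 round `n`,
the fraction of rounds `t_λ < s ≤ n` whose buyer lies in `Q` with value at least `θ_k` is an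
average of i.i.d. indicators with mean `P(θ_j ≥ θ_k, j ∈ Q)`; since `Q` is a function of Phase 1
only, this holds conditionally on `Q`. By Hoeffding's inequality and a union bound over the
`d` relevant deviations and the `≤ T` rounds, each at level `1 / (d T²)`, with probability at
least `1 - 1/T` the frequency of `j*` is never more than `ρ_n` below its mean and that of every
other type never more than `ρ_n` above.

On this event an induction shows that every type `≥ j*` of `Q` stays active: such buyers are
pessimistic and the price is at most the seller's lower bound for them, so they all buy, whence
`μ̂_{j*} ≥ rev(θ_{j*}) ≥ rev(θ_k) ≥ μ̌_k` for every active `k`. In particular `i_Q` and `j*` stay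
active, and the minimum `j_s` of `S_s` passed the elimination test against `j*` at round `s - 1`:
`rev(θ_{j*}) - 2ρ ≤ μ̌_{j*} ≤ μ̂_{j_s} ≤ rev(θ_{j_s}) + 2ρ` (for `s = t_λ + 1` the convention
`ρ_{t_λ} = 1` makes the bound trivial).
-/

section Hoeffding

variable {Ω ι : Type*} {mΩ : MeasurableSpace Ω} {μ : Measure Ω} {X : ι → Ω → ℝ} {s : Finset ι}
  {p ε : ℝ}

lemma hasSubgaussianMGF_sub_of_mem_unitInterval [IsProbabilityMeasure μ] {Y : Ω → ℝ}
    (hY : Measurable Y) (h01 : ∀ ω, Y ω ∈ Set.Icc 0 1) (hmean : μ[Y] = p) :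
    HasSubgaussianMGF (fun ω => Y ω - p) (1 / 4) μ := by
  have h := hasSubgaussianMGF_of_mem_Icc hY.aemeasurable (ae_of_all μ h01)
  rw [hmean] at h
  convert h using 1
  norm_num

lemma measureReal_card_mul_le_sum_le {Y : ι → Ω → ℝ} (hind : iIndepFun Y μ)
    (hY : ∀ i ∈ s, HasSubgaussianMGF (Y i) (1 / 4) μ) (hε : 0 ≤ ε) :
    μ.real {ω | #s * ε ≤ ∑ i ∈ s, Y i ω} ≤ Real.exp (-2 * #s * ε ^ 2) := by
  refine (HasSubgaussianMGF.measure_sum_ge_le_of_iIndepFun hind hY (by positivity)).trans_eq ?_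
  congr 1
  rcases eq_or_ne (#s) 0 with h | h
  · simp [h]
  · simp only [sum_const, nsmul_eq_mul]
    push_cast
    field_simp
    ring

lemma measureReal_card_mul_add_le_sum_le [IsProbabilityMeasure μ] (hind : iIndepFun X μ)
    (hmeas : ∀ i, Measurable (X i)) (h01 : ∀ i ω, X i ω ∈ Set.Icc 0 1)
    (hmean : ∀ i ∈ s, μ[X i] = p) (hε : 0 ≤ ε) :
    μ.real {ω | #s * (p + ε) ≤ ∑ i ∈ s, X i ω} ≤ Real.exp (-2 * #s * ε ^ 2) := by
  refine le_trans (le_of_eq ?_) (measureReal_card_mul_le_sum_le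
    (hind.comp (fun _ x => x - p) fun _ => by fun_prop) (fun i hi =>
      hasSubgaussianMGF_sub_of_mem_unitInterval (hmeas i) (h01 i) (hmean i hi)) hε)
  congr 1
  ext ω
  simp only [Set.mem_ofPred_eq, Function.comp_apply, sum_sub_distrib, sum_const, nsmul_eq_mul]
  constructor <;> intro h <;> linarith

lemma measureReal_sum_le_card_mul_sub_le [IsProbabilityMeasure μ] (hind : iIndepFun X μ)
    (hmeas : ∀ i, Measurable (X i)) (h01 : ∀ i ω, X i ω ∈ Set.Icc 0 1)
    (hmean : ∀ i ∈ s, μ[X i] = p) (hε : 0 ≤ ε) :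
    μ.real {ω | ∑ i ∈ s, X i ω ≤ #s * (p - ε)} ≤ Real.exp (-2 * #s * ε ^ 2) := by
  refine le_trans (le_of_eq ?_) (measureReal_card_mul_le_sum_le
    (hind.comp (fun _ x => -(x - p)) fun _ => by fun_prop) (fun i hi =>
      (hasSubgaussianMGF_sub_of_mem_unitInterval (hmeas i) (h01 i) (hmean i hi)).neg) hε)
  congr 1
  ext ω
  simp only [Set.mem_ofPred_eq, Function.comp_apply, sum_neg_distrib,
    sum_sub_distrib, sum_const, nsmul_eq_mul]
  constructor <;> intro h <;> linarith

end Hoeffding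

lemma measure_setOf_mem_le_of_indep {Ω α : Type*} [Fintype α] {mΩ : MeasurableSpace Ω}
    {μ : Measure Ω} [IsProbabilityMeasure μ] {m₁ m₂ : MeasurableSpace Ω} (hm₁ : m₁ ≤ mΩ)
    (hind : Indep m₁ m₂ μ) {F : Ω → α} (hF : ∀ a, MeasurableSet[m₁] (F ⁻¹' {a}))
    {E : α → Set Ω} (hE : ∀ a, MeasurableSet[m₂] (E a)) {δ : ℝ≥0∞} (hδ : ∀ a, μ (E a) ≤ δ) :
    μ {ω | ω ∈ E (F ω)} ≤ δ := by
  have hsplit : {ω | ω ∈ E (F ω)} = ⋃ a, F ⁻¹' {a} ∩ E a := by ext; simp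
  calc μ {ω | ω ∈ E (F ω)} ≤ ∑ a, μ (F ⁻¹' {a} ∩ E a) := hsplit ▸ measure_iUnion_fintype_le _ _
    _ = ∑ a, μ (F ⁻¹' {a}) * μ (E a) := by
        simp only [(Indep_iff _ _ μ).1 hind _ _ (hF _) (hE _)]
    _ ≤ ∑ a, μ (F ⁻¹' {a}) * δ := by gcongr with a; exact hδ a
    _ = δ := by
        rw [← sum_mul, sum_measure_preimage_singleton _ fun a _ => hm₁ _ (hF a), coe_univ,
          Set.preimage_univ, measure_univ, one_mul]

namespace PricingModel

variable {Ω : Type} [MeasurableSpace Ω] (M : PricingModel Ω)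

noncomputable def revOn (Q₀ : Finset (Fin M.d)) (p : ℝ) : ℝ :=
  p * ∑ j, if p ≤ M.θ j ∧ j ∈ Q₀ then M.q j else 0

noncomputable def massAbove (Q₀ : Finset (Fin M.d)) (k : Fin M.d) : ℝ :=
  ∑ j, if M.θ k ≤ M.θ j ∧ j ∈ Q₀ then M.q j else 0

lemma revQ_eq_revOn (p : ℝ) (ω : Ω) : M.revQ p ω = M.revOn (M.Qset ω) p := rfl

lemma revOn_θ (Q₀ : Finset (Fin M.d)) (k : Fin M.d) :
    M.revOn Q₀ (M.θ k) = M.θ k * M.massAbove Q₀ k := rfl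

lemma massAbove_nonneg (Q₀ : Finset (Fin M.d)) (k : Fin M.d) : 0 ≤ M.massAbove Q₀ k :=
  sum_nonneg fun j _ => by split_ifs <;> simp [M.hq_nonneg j]

lemma massAbove_le_one (Q₀ : Finset (Fin M.d)) (k : Fin M.d) : M.massAbove Q₀ k ≤ 1 :=
  M.hq_sum ▸ sum_le_sum fun j _ => by split_ifs <;> simp [M.hq_nonneg j]

lemma revOn_θ_mem_Icc (Q₀ : Finset (Fin M.d)) (k : Fin M.d) :
    M.revOn Q₀ (M.θ k) ∈ Set.Icc 0 1 :=
  ⟨mul_nonneg (M.hθ_mem k).1 (M.massAbove_nonneg Q₀ k),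
    mul_le_one₀ (M.hθ_mem k).2 (M.massAbove_nonneg Q₀ k) (M.massAbove_le_one Q₀ k)⟩

lemma rho_nonneg (n : ℕ) : 0 ≤ M.rho n := Real.sqrt_nonneg _

noncomputable def revMaximizers (Q₀ : Finset (Fin M.d)) : Finset (Fin M.d) :=
  Q₀.filter fun i => ∀ k ∈ Q₀, M.revOn Q₀ (M.θ k) ≤ M.revOn Q₀ (M.θ i)

/-- Unlike the given `i_Q`, this maximizer depends on `ω` only through `Q`, as conditioning on `Q`
requires. Junk value `0` if `Q₀ = ∅`. -/
noncomputable def optType (Q₀ : Finset (Fin M.d)) : Fin M.d :=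
  if h : (M.revMaximizers Q₀).Nonempty then (M.revMaximizers Q₀).min' h else ⟨0, M.hd⟩

lemma revMaximizers_nonempty {Q₀ : Finset (Fin M.d)} (hQ : Q₀.Nonempty) :
    (M.revMaximizers Q₀).Nonempty := by
  obtain ⟨i, hi, hmax⟩ := Q₀.exists_max_image (fun k => M.revOn Q₀ (M.θ k)) hQ
  exact ⟨i, mem_filter.2 ⟨hi, hmax⟩⟩

lemma optType_mem_revMaximizers {Q₀ : Finset (Fin M.d)} (hQ : Q₀.Nonempty) :
    M.optType Q₀ ∈ M.revMaximizers Q₀ := by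
  rw [optType, dif_pos (M.revMaximizers_nonempty hQ)]
  exact min'_mem _ _

lemma optType_le {Q₀ : Finset (Fin M.d)} {i : Fin M.d} (hi : i ∈ M.revMaximizers Q₀) :
    M.optType Q₀ ≤ i := by
  rw [optType, dif_pos ⟨i, hi⟩]
  exact min'_le _ _ hi

lemma optType_mem {Q₀ : Finset (Fin M.d)} (hQ : Q₀.Nonempty) : M.optType Q₀ ∈ Q₀ :=
  (mem_filter.1 (M.optType_mem_revMaximizers hQ)).1

lemma revOn_le_revOn_optType {Q₀ : Finset (Fin M.d)} {k : Fin M.d} (hk : k ∈ Q₀) :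
    M.revOn Q₀ (M.θ k) ≤ M.revOn Q₀ (M.θ (M.optType Q₀)) :=
  (mem_filter.1 (M.optType_mem_revMaximizers ⟨k, hk⟩)).2 k hk

/-- Ties in value are broken towards the smallest index. -/
lemma θ_optType_le_iff {Q₀ : Finset (Fin M.d)} {j : Fin M.d} (hj : j ∈ Q₀) :
    M.θ (M.optType Q₀) ≤ M.θ j ↔ M.optType Q₀ ≤ j := by
  refine ⟨fun h => ?_, fun h => M.hθ_mono h⟩
  by_contra! hlt
  have hθ : M.θ j = M.θ (M.optType Q₀) := le_antisymm (M.hθ_mono hlt.le) h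
  have hjmax : j ∈ M.revMaximizers Q₀ :=
    mem_filter.2 ⟨hj, fun k hk => hθ ▸ M.revOn_le_revOn_optType hk⟩
  exact (M.optType_le hjmax).not_gt hlt

noncomputable def aboveInd (Q₀ : Finset (Fin M.d)) (k : Fin M.d) (s : ℕ) (ω : Ω) : ℝ :=
  if M.θ k ≤ M.θ (M.itype s ω) ∧ M.itype s ω ∈ Q₀ then 1 else 0

/-- `θ k * aboveCount (Q ω) k n ω / (n - t_λ)` is `μ̄_{k,n}` as soon as all these buyers bought. -/
noncomputable def aboveCount (Q₀ : Finset (Fin M.d)) (k : Fin M.d) (n : ℕ) (ω : Ω) : ℝ :=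
  ∑ s ∈ Icc (M.tlam + 1) n, M.aboveInd Q₀ k s ω

def UpperDev (Q₀ : Finset (Fin M.d)) (k : Fin M.d) (n : ℕ) : Set Ω :=
  {ω | (#(Icc (M.tlam + 1) n) : ℝ) * (M.massAbove Q₀ k + M.rho n) ≤ M.aboveCount Q₀ k n ω}

def LowerDev (Q₀ : Finset (Fin M.d)) (k : Fin M.d) (n : ℕ) : Set Ω :=
  {ω | M.aboveCount Q₀ k n ω ≤ (#(Icc (M.tlam + 1) n) : ℝ) * (M.massAbove Q₀ k - M.rho n)}

/-- Only `d` deviations per round enter (the upward one of `optType Q₀` is harmless), which is what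
makes the union bound give `1 / T`. -/
def BadEvent (Q₀ : Finset (Fin M.d)) (t : ℕ) : Set Ω :=
  ⋃ n ∈ Ico (M.tlam + 1) t,
    (M.LowerDev Q₀ (M.optType Q₀) n ∪ ⋃ k ∈ univ.erase (M.optType Q₀), M.UpperDev Q₀ k n)

noncomputable def roundData (s : ℕ) (ω : Ω) : Fin M.d × (Fin M.d → ℝ) :=
  (M.itype s ω, fun i => M.vdraw s i ω)

lemma measurable_roundData (s : ℕ) : Measurable (M.roundData s) :=
  (M.h_itype_meas s).prodMk (measurable_pi_lambda _ (M.h_vdraw_meas s))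

noncomputable abbrev roundsMS (R : Set ℕ) : MeasurableSpace Ω :=
  ⨆ s ∈ R, MeasurableSpace.comap (M.roundData s) inferInstance

lemma indep_roundsMS {R R' : Set ℕ} (h : Disjoint R R') :
    Indep (M.roundsMS R) (M.roundsMS R') M.Pr :=
  indep_iSup_of_disjoint (fun s => (M.measurable_roundData s).comap_le) M.h_indep h

lemma roundsMS_le (R : Set ℕ) : M.roundsMS R ≤ ‹MeasurableSpace Ω› :=
  iSup₂_le fun s _ => (M.measurable_roundData s).comap_le

lemma measurable_itype_roundsMS {R : Set ℕ} {s : ℕ} (hs : s ∈ R) :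
    Measurable[M.roundsMS R] (M.itype s) :=
  measurable_fst.comp <| Measurable.of_comap_le <|
    le_iSup₂ (f := fun s _ => MeasurableSpace.comap (M.roundData s) inferInstance) s hs

lemma measurableSet_Qset_preimage (Q₀ : Finset (Fin M.d)) :
    MeasurableSet[M.roundsMS (Set.Iic M.tlam)] (M.Qset ⁻¹' {Q₀}) := by
  have hqbar : ∀ i, Measurable[M.roundsMS (Set.Iic M.tlam)] (M.qbar i) := fun i => by
    unfold qbar
    simp only [card_filter, Nat.cast_sum, Nat.cast_ite, Nat.cast_one, Nat.cast_zero]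
    refine Measurable.div_const (Finset.measurable_sum _ fun s hs => ?_) _
    exact (measurable_of_finite fun j => if j = i then (1 : ℝ) else 0).comp
      (M.measurable_itype_roundsMS (Set.mem_Iic.2 (mem_Icc.1 hs).2))
  have hset : M.Qset ⁻¹' {Q₀} = ⋂ i, {ω | 3 * M.lam / 4 ≤ M.qbar i ω ↔ i ∈ Q₀} := by
    ext ω
    simp [Finset.ext_iff, Qset]
  rw [hset]
  exact MeasurableSet.iInter fun i =>
    (measurableSet_le measurable_const (hqbar i)).iff (MeasurableSet.const (i ∈ Q₀))

lemma measurable_aboveInd (Q₀ : Finset (Fin M.d)) (k : Fin M.d) {R : Set ℕ} {s : ℕ}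
    (hs : s ∈ R) : Measurable[M.roundsMS R] (M.aboveInd Q₀ k s) :=
  (measurable_of_finite fun i => if M.θ k ≤ M.θ i ∧ i ∈ Q₀ then (1 : ℝ) else 0).comp
    (M.measurable_itype_roundsMS hs)

lemma measurable_aboveCount (Q₀ : Finset (Fin M.d)) (k : Fin M.d) (n : ℕ) :
    Measurable[M.roundsMS (Set.Ioi M.tlam)] (M.aboveCount Q₀ k n) :=
  Finset.measurable_sum _ fun _ hs =>
    M.measurable_aboveInd Q₀ k (Set.mem_Ioi.2 (Nat.lt_of_succ_le (mem_Icc.1 hs).1))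

lemma measurableSet_badEvent (Q₀ : Finset (Fin M.d)) (t : ℕ) :
    MeasurableSet[M.roundsMS (Set.Ioi M.tlam)] (M.BadEvent Q₀ t) :=
  Finset.measurableSet_biUnion _ fun n _ =>
    (measurableSet_le (M.measurable_aboveCount _ _ n) measurable_const).union <|
      Finset.measurableSet_biUnion _ fun k _ =>
        measurableSet_le measurable_const (M.measurable_aboveCount _ k n)

lemma iIndepFun_aboveInd (Q₀ : Finset (Fin M.d)) (k : Fin M.d) :
    iIndepFun (M.aboveInd Q₀ k) M.Pr :=
  M.h_indep.comp (fun _ x => if M.θ k ≤ M.θ x.1 ∧ x.1 ∈ Q₀ then (1 : ℝ) else 0)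
    fun _ => (measurable_of_finite fun i => if M.θ k ≤ M.θ i ∧ i ∈ Q₀ then (1 : ℝ) else 0).comp
      measurable_fst

lemma aboveInd_mem_Icc (Q₀ : Finset (Fin M.d)) (k : Fin M.d) (s : ℕ) (ω : Ω) :
    M.aboveInd Q₀ k s ω ∈ Set.Icc 0 1 := by
  unfold aboveInd; split_ifs <;> simp

lemma integral_aboveInd (Q₀ : Finset (Fin M.d)) (k : Fin M.d) (s : ℕ) :
    M.Pr[M.aboveInd Q₀ k s] = M.massAbove Q₀ k := by
  have := M.hPr
  let f : Fin M.d → ℝ := fun i => if M.θ k ≤ M.θ i ∧ i ∈ Q₀ then 1 else 0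
  have hmap : ∀ i, (M.Pr.map (M.itype s)).real {i} = M.q i := fun i => by
    rw [measureReal_def, Measure.map_apply (M.h_itype_meas s) (measurableSet_singleton i)]
    exact (congrArg ENNReal.toReal (M.h_itype_law s i)).trans
      (ENNReal.toReal_ofReal (M.hq_nonneg i))
  calc M.Pr[M.aboveInd Q₀ k s] = ∫ i, f i ∂(M.Pr.map (M.itype s)) :=
        (integral_map (M.h_itype_meas s).aemeasurable
          (measurable_of_finite f).aestronglyMeasurable).symm
    _ = M.massAbove Q₀ k := by
        rw [integral_fintype (Integrable.of_finite)]
        simp [hmap, f, massAbove]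

lemma exp_neg_two_card_mul_rho_sq {n : ℕ} (hn : M.tlam < n) :
    Real.exp (-2 * #(Icc (M.tlam + 1) n) * M.rho n ^ 2) = 1 / (M.d * M.T ^ 2) := by
  have hdT : (1 : ℝ) ≤ M.d * M.T ^ 2 := one_le_mul_of_one_le_of_one_le
    (by exact_mod_cast M.hd) (one_le_pow₀ (by exact_mod_cast M.hT))
  have hn' : (0 : ℝ) < n - M.tlam := sub_pos.2 (by exact_mod_cast hn)
  rw [Nat.card_Icc, Nat.add_sub_add_right, Nat.cast_sub hn.le, rho,
    Real.sq_sqrt (div_nonneg (Real.log_nonneg hdT) (by linarith)),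
    show -2 * ((n : ℝ) - M.tlam) * (Real.log (M.d * M.T ^ 2) / (2 * ((n : ℝ) - M.tlam)))
      = -Real.log (M.d * M.T ^ 2) by field_simp [hn'.ne'],
    Real.exp_neg, Real.exp_log (by linarith), one_div]

lemma measureReal_upperDev_le (Q₀ : Finset (Fin M.d)) (k : Fin M.d) {n : ℕ} (hn : M.tlam < n) :
    M.Pr.real (M.UpperDev Q₀ k n) ≤ 1 / (M.d * M.T ^ 2) := by
  have := M.hPr
  rw [← M.exp_neg_two_card_mul_rho_sq hn]
  exact measureReal_card_mul_add_le_sum_le (M.iIndepFun_aboveInd Q₀ k)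
    (fun s => (M.measurable_aboveInd Q₀ k (Set.mem_univ s)).mono (M.roundsMS_le _) le_rfl)
    (M.aboveInd_mem_Icc Q₀ k) (fun s _ => M.integral_aboveInd Q₀ k s) (M.rho_nonneg n)

lemma measureReal_lowerDev_le (Q₀ : Finset (Fin M.d)) (k : Fin M.d) {n : ℕ} (hn : M.tlam < n) :
    M.Pr.real (M.LowerDev Q₀ k n) ≤ 1 / (M.d * M.T ^ 2) := by
  have := M.hPr
  rw [← M.exp_neg_two_card_mul_rho_sq hn]
  exact measureReal_sum_le_card_mul_sub_le (M.iIndepFun_aboveInd Q₀ k)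
    (fun s => (M.measurable_aboveInd Q₀ k (Set.mem_univ s)).mono (M.roundsMS_le _) le_rfl)
    (M.aboveInd_mem_Icc Q₀ k) (fun s _ => M.integral_aboveInd Q₀ k s) (M.rho_nonneg n)

lemma measure_badEvent_le (Q₀ : Finset (Fin M.d)) {t : ℕ} (ht : t ≤ M.T) :
    M.Pr (M.BadEvent Q₀ t) ≤ 1 / (M.T : ℝ≥0∞) := by
  have := M.hPr
  have hd : (0 : ℝ) < M.d := by exact_mod_cast M.hd
  have hT : (0 : ℝ) < M.T := by exact_mod_cast M.hT
  have hcard : (#(Ico (M.tlam + 1) t) : ℝ) ≤ M.T := by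
    rw [Nat.card_Ico]; exact_mod_cast (Nat.sub_le t _).trans ht
  have hreal : M.Pr.real (M.BadEvent Q₀ t) ≤ 1 / M.T := calc
    M.Pr.real (M.BadEvent Q₀ t)
      ≤ ∑ n ∈ Ico (M.tlam + 1) t, (M.Pr.real (M.LowerDev Q₀ (M.optType Q₀) n)
          + ∑ k ∈ univ.erase (M.optType Q₀), M.Pr.real (M.UpperDev Q₀ k n)) :=
        (measureReal_biUnion_finset_le _ _).trans <| sum_le_sum fun n _ =>
          (measureReal_union_le _ _).trans (add_le_add_right (measureReal_biUnion_finset_le _ _) _)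
    _ ≤ ∑ n ∈ Ico (M.tlam + 1) t, (1 / ((M.d : ℝ) * M.T ^ 2)
          + ∑ k ∈ univ.erase (M.optType Q₀), 1 / ((M.d : ℝ) * M.T ^ 2)) := by
        gcongr with n hn k hk
        · exact M.measureReal_lowerDev_le _ _ (mem_Ico.1 hn).1
        · exact M.measureReal_upperDev_le _ _ (mem_Ico.1 hn).1
    _ = #(Ico (M.tlam + 1) t) / M.T ^ 2 := by
        have h1 : ((M.d - 1 : ℕ) : ℝ) = M.d - 1 := by rw [Nat.cast_sub M.hd, Nat.cast_one]
        simp only [sum_const, card_erase_of_mem (mem_univ _), card_univ, Fintype.card_fin,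
          nsmul_eq_mul, h1]
        field_simp
        ring
    _ ≤ 1 / M.T := by
        rw [div_le_div_iff₀ (by positivity) hT]; nlinarith
  rw [← ofReal_measureReal, ← ENNReal.ofReal_natCast, ← ENNReal.ofReal_one,
    ← ENNReal.ofReal_div_of_pos hT]
  exact ENNReal.ofReal_le_ofReal hreal

lemma LBi_itype_le_LBt {s : ℕ} (hs : 1 ≤ s) (hsT : s ≤ M.T) (ω : Ω) :
    M.LBi (M.itype s ω) s ω ≤ M.LBt s ω := by
  unfold LBi LBt
  split_ifs with h
  · exact le_rfl
  · have hη := M.hη.1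
    have hn : (0 : ℝ) < M.nPhi (M.itype s ω) s ω := by exact_mod_cast Nat.pos_of_ne_zero h
    have hlog : Real.log (s / M.η) ≤ Real.log (M.T / M.η) :=
      Real.log_le_log (div_pos (by exact_mod_cast hs) hη) (by gcongr)
    gcongr

lemma card_Icc_tlam_add_one {n : ℕ} (hn : M.tlam < n) :
    (#(Icc (M.tlam + 1) n) : ℝ) = n - M.tlam := by
  rw [Nat.card_Icc, Nat.add_sub_add_right, Nat.cast_sub hn.le]

lemma mubar_le (k : Fin M.d) {n : ℕ} (hn : M.tlam < n) (ω : Ω) :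
    M.mubar k n ω ≤ M.θ k * M.aboveCount (M.Qset ω) k n ω / (n - M.tlam) := by
  have hpos : (0 : ℝ) < n - M.tlam := sub_pos.2 (by exact_mod_cast hn)
  unfold mubar aboveCount
  rw [mul_sum]
  gcongr with s
  unfold aboveInd
  split_ifs with h₁ h₂ <;> simp_all [(M.hθ_mem k).1]

lemma mubar_eq_of_buy (k : Fin M.d) (n : ℕ) (ω : Ω)
    (hbuy : ∀ s ∈ Icc (M.tlam + 1) n, M.θ k ≤ M.θ (M.itype s ω) → M.itype s ω ∈ M.Qset ω →
      M.buy s ω = true) :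
    M.mubar k n ω = M.θ k * M.aboveCount (M.Qset ω) k n ω / (n - M.tlam) := by
  unfold mubar aboveCount
  rw [mul_sum]
  congr 1
  refine sum_congr rfl fun s hs => ?_
  unfold aboveInd
  split_ifs with h₁ h₂ <;> simp_all

lemma mubar_le_revOn_add_rho {k : Fin M.d} {n : ℕ} (hn : M.tlam < n) {ω : Ω}
    (hω : ω ∉ M.UpperDev (M.Qset ω) k n) :
    M.mubar k n ω ≤ M.revOn (M.Qset ω) (M.θ k) + M.rho n := by
  have hpos : (0 : ℝ) < n - M.tlam := sub_pos.2 (by exact_mod_cast hn)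
  have hcount : M.aboveCount (M.Qset ω) k n ω / (n - M.tlam)
      ≤ M.massAbove (M.Qset ω) k + M.rho n := by
    simp only [UpperDev, Set.mem_ofPred_eq, not_le, M.card_Icc_tlam_add_one hn] at hω
    rw [div_le_iff₀ hpos]; linarith
  calc M.mubar k n ω ≤ M.θ k * (M.aboveCount (M.Qset ω) k n ω / (n - M.tlam)) :=
        (M.mubar_le k hn ω).trans_eq (mul_div_assoc _ _ _)
    _ ≤ M.θ k * (M.massAbove (M.Qset ω) k + M.rho n) := by gcongr; exact (M.hθ_mem k).1
    _ ≤ M.revOn (M.Qset ω) (M.θ k) + M.rho n := by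
        rw [revOn_θ]; nlinarith [(M.hθ_mem k).2, M.rho_nonneg n]

lemma revOn_sub_rho_le_mubar {k : Fin M.d} {n : ℕ} (hn : M.tlam < n) {ω : Ω}
    (hω : ω ∉ M.LowerDev (M.Qset ω) k n)
    (hbuy : ∀ s ∈ Icc (M.tlam + 1) n, M.θ k ≤ M.θ (M.itype s ω) → M.itype s ω ∈ M.Qset ω →
      M.buy s ω = true) :
    M.revOn (M.Qset ω) (M.θ k) - M.rho n ≤ M.mubar k n ω := by
  have hpos : (0 : ℝ) < n - M.tlam := sub_pos.2 (by exact_mod_cast hn)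
  have hcount : M.massAbove (M.Qset ω) k - M.rho n
      ≤ M.aboveCount (M.Qset ω) k n ω / (n - M.tlam) := by
    simp only [LowerDev, Set.mem_ofPred_eq, not_le, M.card_Icc_tlam_add_one hn] at hω
    rw [le_div_iff₀ hpos]; linarith
  calc M.revOn (M.Qset ω) (M.θ k) - M.rho n
      ≤ M.θ k * (M.massAbove (M.Qset ω) k - M.rho n) := by
        rw [revOn_θ]; nlinarith [(M.hθ_mem k).2, M.rho_nonneg n]
    _ ≤ M.θ k * (M.aboveCount (M.Qset ω) k n ω / (n - M.tlam)) := by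
        gcongr; exact (M.hθ_mem k).1
    _ = M.mubar k n ω := by rw [M.mubar_eq_of_buy k n ω hbuy, mul_div_assoc]

lemma notMem_deviations_of_notMem_badEvent {Q₀ : Finset (Fin M.d)} {t : ℕ} {ω : Ω}
    (hω : ω ∉ M.BadEvent Q₀ t) {n : ℕ} (hn : M.tlam < n) (hnt : n < t) :
    ω ∉ M.LowerDev Q₀ (M.optType Q₀) n ∧ ∀ k ≠ M.optType Q₀, ω ∉ M.UpperDev Q₀ k n := by
  simp only [BadEvent, Set.mem_iUnion, not_exists, Set.mem_union, not_or, mem_Ico,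
    mem_erase, mem_univ, and_true] at hω
  exact hω n ⟨hn, hnt⟩

end PricingModel

namespace Algorithm

variable {Ω : Type} [MeasurableSpace Ω] {M : PricingModel Ω} (A : Algorithm M)

lemma S_subset_of_le {s' s : ℕ} (hs' : M.tlam + 1 ≤ s') (hss : s' ≤ s) (ω : Ω) :
    A.S s ω ⊆ A.S s' ω := by
  induction s, hss using Nat.le_induction with
  | base => exact subset_rfl
  | succ n hn ih =>
    rw [A.h_S_step n ω (by omega)]
    exact (filter_subset _ _).trans ih

lemma mem_S_succ {n : ℕ} (hn : M.tlam < n) {ω : Ω} {i j : Fin M.d} (hi : i ∈ A.S n ω)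
    (hj : j ∈ A.S n ω) (hji : j ≤ i) (hk : ∀ k ∈ A.S n ω, M.mucheck k n ω ≤ M.muhat j n ω) :
    i ∈ A.S (n + 1) ω := by
  rw [A.h_S_step n ω hn]
  exact mem_filter.2 ⟨hi, j, hj, hji, hk⟩

lemma mucheck_le_muhat_of_isLeast {n : ℕ} (hn : M.tlam < n) {ω : Ω} {j : Fin M.d}
    (hj : IsLeast (A.S (n + 1) ω : Set (Fin M.d)) j) :
    ∀ k ∈ A.S n ω, M.mucheck k n ω ≤ M.muhat j n ω := by
  obtain ⟨hjS, hjmin⟩ := hj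
  rw [mem_coe, A.h_S_step n ω hn] at hjS
  obtain ⟨-, j', hj'S, hj'j, hk⟩ := mem_filter.1 hjS
  have hjj' : j ≤ j' := hjmin (A.mem_S_succ hn hj'S hj'S le_rfl hk)
  rwa [le_antisymm hj'j hjj'] at hk

lemma buy_of_itype_mem_S (hP : M.Pessimistic) (hBR : M.BuyerRule) {s : ℕ} (hs : M.tlam < s)
    (hsT : s ≤ M.T) {ω : Ω} (hmem : M.itype s ω ∈ A.S s ω) : M.buy s ω = true := by
  have hs1 : 1 ≤ s := by omega
  have hprice : M.price s ω ≤ M.LBi (M.itype s ω) s ω := by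
    rw [A.h_price2 s ω hs, dif_pos ⟨_, hmem⟩]
    exact (inf'_le _ hmem).trans (min_le_right _ _)
  exact (hBR s ω).2 <|
    hprice.trans ((M.LBi_itype_le_LBt hs1 hsT ω).trans (hP s ω hs1 hsT))

lemma revOn_optType_sub_rho_le_mubar (hP : M.Pessimistic) (hBR : M.BuyerRule) {ω : Ω} {t : ℕ}
    (ht : t ≤ M.T) (hω : ω ∉ M.BadEvent (M.Qset ω) t) {n : ℕ} (hn : M.tlam < n) (hnt : n < t)
    (hS : ∀ j ∈ M.Qset ω, M.optType (M.Qset ω) ≤ j → j ∈ A.S n ω) :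
    M.revOn (M.Qset ω) (M.θ (M.optType (M.Qset ω))) - M.rho n
      ≤ M.mubar (M.optType (M.Qset ω)) n ω := by
  refine M.revOn_sub_rho_le_mubar hn (M.notMem_deviations_of_notMem_badEvent hω hn hnt).1
    fun s hs hθ hQs => ?_
  obtain ⟨hs₁, hsn⟩ := mem_Icc.1 hs
  exact A.buy_of_itype_mem_S hP hBR hs₁ (by omega) <|
    A.S_subset_of_le hs₁ hsn ω (hS _ hQs ((M.θ_optType_le_iff hQs).1 hθ))

lemma mem_S_of_optType_le (hP : M.Pessimistic) (hBR : M.BuyerRule) {ω : Ω}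
    (hQ : (M.Qset ω).Nonempty) {t : ℕ} (ht : t ≤ M.T) (hω : ω ∉ M.BadEvent (M.Qset ω) t)
    {n : ℕ} (hn : M.tlam + 1 ≤ n) (hnt : n ≤ t) :
    ∀ j ∈ M.Qset ω, M.optType (M.Qset ω) ≤ j → j ∈ A.S n ω := by
  set o := M.optType (M.Qset ω)
  induction n, hn using Nat.le_induction with
  | base => exact fun j hj _ => A.h_S_init ω ▸ hj
  | succ n hn ih =>
    intro j hj hoj
    have hS := ih (by omega)
    have hlow := A.revOn_optType_sub_rho_le_mubar hP hBR ht hω (by omega) (by omega) hS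
    refine A.mem_S_succ (by omega) (hS j hj hoj) (hS o (M.optType_mem hQ) le_rfl) hoj
      fun k hk => ?_
    have hkQ : k ∈ M.Qset ω := A.h_S_init ω ▸ A.S_subset_of_le le_rfl hn ω hk
    unfold PricingModel.mucheck PricingModel.muhat
    by_cases hko : k = o
    · rw [hko]; linarith [M.rho_nonneg n]
    · have hup := M.mubar_le_revOn_add_rho (n := n) (by omega)
        ((M.notMem_deviations_of_notMem_badEvent hω (by omega) (by omega)).2 k hko)
      linarith [M.revOn_le_revOn_optType hkQ]

lemma successive_elimination_of_notMem_badEvent (hP : M.Pessimistic) (hBR : M.BuyerRule)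
    {ω : Ω} {pQ : ℝ} {iQ : Fin M.d} (hiQ : iQ ∈ M.Qset ω) (hθiQ : M.θ iQ = pQ)
    (hopt : ∀ p, M.revQ p ω ≤ M.revQ pQ ω) {t : ℕ} (ht : t ≤ M.T)
    (hω : ω ∉ M.BadEvent (M.Qset ω) t) :
    ∀ s ∈ Icc (M.tlam + 1) t, iQ ∈ A.S s ω ∧ ∃ j ∈ A.S s ω, (∀ k ∈ A.S s ω, j ≤ k) ∧
      M.revQ pQ ω - M.revQ (M.θ j) ω ≤ 4 * M.rho' (s - 1) := by
  intro s hs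
  obtain ⟨hs₁, hst⟩ := mem_Icc.1 hs
  set o := M.optType (M.Qset ω)
  have hQ : (M.Qset ω).Nonempty := ⟨iQ, hiQ⟩
  have hiQmax : iQ ∈ M.revMaximizers (M.Qset ω) :=
    mem_filter.2 ⟨hiQ, fun k _ => hθiQ ▸ hopt (M.θ k)⟩
  have hrev : M.revQ pQ ω = M.revOn (M.Qset ω) (M.θ o) :=
    le_antisymm (hθiQ ▸ M.revOn_le_revOn_optType hiQ) (hopt _)
  have hinv : ∀ n, M.tlam + 1 ≤ n → n ≤ t → ∀ j ∈ M.Qset ω, o ≤ j → j ∈ A.S n ω :=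
    fun _ => A.mem_S_of_optType_le hP hBR hQ ht hω
  have hne : (A.S s ω).Nonempty := ⟨o, hinv s hs₁ hst o (M.optType_mem hQ) le_rfl⟩
  refine ⟨hinv s hs₁ hst iQ hiQ (M.optType_le hiQmax), (A.S s ω).min' hne, min'_mem _ _,
    fun k hk => min'_le _ _ hk, ?_⟩
  rw [hrev, M.revQ_eq_revOn]
  set j := (A.S s ω).min' hne
  rcases hs₁.eq_or_lt with rfl | hlt
  · simp only [Nat.add_sub_cancel, PricingModel.rho', if_pos]
    linarith [(M.revOn_θ_mem_Icc (M.Qset ω) o).2, (M.revOn_θ_mem_Icc (M.Qset ω) j).1]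
  obtain ⟨n, rfl⟩ : ∃ n, s = n + 1 := ⟨s - 1, by omega⟩
  have hn : M.tlam < n := by omega
  rw [Nat.add_sub_cancel, PricingModel.rho', if_neg hn.ne']
  have hSn := hinv n (by omega) (by omega)
  have hlow := A.revOn_optType_sub_rho_le_mubar hP hBR ht hω hn (by omega) hSn
  have hcheck := A.mucheck_le_muhat_of_isLeast hn ⟨min'_mem _ hne, fun k hk => min'_le _ _ hk⟩
    o (hSn o (M.optType_mem hQ) le_rfl)
  unfold PricingModel.mucheck PricingModel.muhat at hcheck
  by_cases hjo : j = o
  · rw [hjo]; linarith [M.rho_nonneg n]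
  · have hup := M.mubar_le_revOn_add_rho hn
      ((M.notMem_deviations_of_notMem_badEvent hω hn (by omega)).2 j hjo)
    linarith

end Algorithm

/-- the successive-elimination events.  Let `p*(Q)` maximize
`rev(·, Q)` with `θ_{i_Q} = p*(Q)`, `i_Q ∈ Q`; `B_s` is the event that `i_Q ∈ S_s`
and `rev(p*(Q),Q) − rev(θ_{j_s},Q) ≤ 4 ρ_{s−1}` where `j_s = min S_s` (and
`ρ_{t_λ} = 1` by convention); `C_t = ∩_{s=t_λ+1}^t B_s`.  Then `Pr(C_tᶜ) ≤ 1/T`. -/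
theorem lemma_successive_elimination :
    ∀ (Ω : Type) [MeasurableSpace Ω] (M : PricingModel Ω) (A : Algorithm M),
      M.Pessimistic → M.BuyerRule → M.TauAdapted →
      ∀ (pQ : Ω → ℝ) (iQ : Ω → Fin M.d),
        (∀ ω, iQ ω ∈ M.Qset ω) →
        (∀ ω, M.θ (iQ ω) = pQ ω) →
        (∀ ω p, M.revQ p ω ≤ M.revQ (pQ ω) ω) →
        ∀ t, M.tlam < t → t ≤ M.T →
          M.Pr {ω | ¬ ∀ s ∈ Finset.Icc (M.tlam + 1) t,
              iQ ω ∈ A.S s ω ∧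
              ∃ j ∈ A.S s ω, (∀ k ∈ A.S s ω, j ≤ k) ∧
                M.revQ (pQ ω) ω - M.revQ (M.θ j) ω ≤ 4 * M.rho' (s - 1)}
            ≤ 1 / (M.T : ℝ≥0∞) := by
  intro Ω _ M A hP hBR _ pQ iQ hiQ hθiQ hopt t _ htT
  have := M.hPr
  refine (measure_mono ?_).trans <| measure_setOf_mem_le_of_indep (M.roundsMS_le _)
      (M.indep_roundsMS (Set.Iic_disjoint_Ioi le_rfl)) (M.measurableSet_Qset_preimage ·)
      (M.measurableSet_badEvent · t) (M.measure_badEvent_le · htT)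
  intro ω hω
  rw [Set.mem_ofPred_eq] at hω ⊢
  by_contra hgood
  exact hω <|
    A.successive_elimination_of_notMem_badEvent hP hBR (hiQ ω) (hθiQ ω) (hopt ω) htT hgood
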